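/- arXiv:1105.4163 — 4 statements merged into one kernel-verified Lean document; each statement's English description precedes it below -/
import Mathlib

section
/- For any integer l ≥ 2, if M is a simple matroid with no U_{2,l+2}-minor, then the number of elements of M is at most (l^{r(M)} - 1)/(l - 1). -/
open Matroid Set

/-- The rank of a set `X` in a matroid `M`: the supremum of sizes of independent subsets. -/
noncomputable def mrk {α : Type*} (M : Matroid α) (X : Set α) : ℕ :=
  ⨆ I : {I : Set α // M.Indep I ∧ I ⊆ X}, I.1.ncard

/-- The rank of a matroid. -/
noncomputable def mrank {α : Type*} (M : Matroid α) : ℕ := mrk M M.E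

/-- Deletion of a set from a matroid. -/
def mdelete {α : Type*} (M : Matroid α) (D : Set α) : Matroid α := M ↾ (M.E \ D)

/-- Contraction of a set in a matroid, via duality. -/
def mcontract {α : Type*} (M : Matroid α) (C : Set α) : Matroid α := (M✶ ↾ (M.E \ C))✶

/-- `eps M X` is the number of points (rank-1 flats) of the restriction `M ↾ X`. -/
noncomputable def eps {α : Type*} (M : Matroid α) (X : Set α) : ℕ :=
  {P : Set α | (M ↾ X).IsFlat P ∧ mrk (M ↾ X) P = 1}.ncard

/-- `N` is isomorphic to the uniform matroid `U_{2,n}` (the `n`-point line). -/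
def IsUnif2 {α : Type*} (N : Matroid α) (n : ℕ) : Prop :=
  N.E.Finite ∧ N.E.ncard = n ∧ ∀ I ⊆ N.E, (N.Indep I ↔ I.Finite ∧ I.ncard ≤ 2)

/-- `M` has a minor isomorphic to `U_{2,n}`. -/
def HasLineMinor {α : Type*} (M : Matroid α) (n : ℕ) : Prop :=
  ∃ C D : Set α, IsUnif2 (mdelete (mcontract M C) D) n

/-- `M` is simple: every one- or two-element subset of the ground set is independent. -/
def MSimple {α : Type*} (M : Matroid α) : Prop :=
  ∀ e ∈ M.E, ∀ f ∈ M.E, M.Indep {e, f}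

/-- `M` is round: the ground set admits no partition into two sets of smaller rank. -/
def Round {α : Type*} (M : Matroid α) : Prop :=
  ¬ ∃ A B : Set α, A ∪ B = M.E ∧ Disjoint A B ∧ mrk M A < mrank M ∧ mrk M B < mrank M

/-- `N` is isomorphic to the projective geometry `PG(n-1, F)`: its ground set is in
bijection with the rank-1 subspaces of `F^n` in such a way that independence corresponds to
linear independence. -/
def IsProjGeom {α : Type*} (N : Matroid α) (n : ℕ) (F : Type*) [Field F] : Prop :=
  ∃ f : α → Submodule F (Fin n → F),
    Set.BijOn f N.E {W : Submodule F (Fin n → F) | Module.finrank F W = 1} ∧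
    ∀ I ⊆ N.E, (N.Indep I ↔ I.Finite ∧ Module.finrank F ↥(⨆ x ∈ I, f x) = I.ncard)

/-!
Kung's argument. Fix a point `e` of `M`. The lines through `e` cover `E \ {e}`, and each has at
most `l + 1` points, since a longer line would be a `U_{2,l+2}`-restriction; so each contributes at
most `l` elements besides `e`. These lines are the points of `M ／ {e}`, so they correspond to the
elements of the simplification of `M ／ {e}`, a simple minor of `M` of smaller rank. By induction on
the rank, `|E| ≤ 1 + l (l^(r-1) - 1)/(l - 1) = (l^r - 1)/(l - 1)`.
-/

lemma Set.ncard_le_mul_ncard_of_subset_biUnion {α ι : Type*} {s : Set α} {T : Set ι}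
    {f : ι → Set α} {n : ℕ} (hs : s.Finite) (hT : T.Finite) (hcover : s ⊆ ⋃ t ∈ T, f t)
    (hf : ∀ t ∈ T, (s ∩ f t).ncard ≤ n) : s.ncard ≤ n * T.ncard := by
  classical
  have hsub : hs.toFinset ⊆ hT.toFinset.biUnion fun t ↦ (hs.inter_of_left (f t)).toFinset := by
    intro x hx
    obtain ⟨t, ht, hxt⟩ := mem_iUnion₂.1 (hcover (hs.mem_toFinset.1 hx))
    exact Finset.mem_biUnion.2 ⟨t, hT.mem_toFinset.2 ht, (hs.inter_of_left _).mem_toFinset.2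
      ⟨hs.mem_toFinset.1 hx, hxt⟩⟩
  rw [ncard_eq_toFinset_card s hs, ncard_eq_toFinset_card T hT, mul_comm]
  refine (Finset.card_le_card hsub).trans (Finset.card_biUnion_le_card_mul _ _ _ fun t ht ↦ ?_)
  rw [← ncard_eq_toFinset_card _ (hs.inter_of_left _)]
  exact hf t (hT.mem_toFinset.1 ht)

namespace Matroid

variable {α : Type*} {M : Matroid α} {I R X : Set α} {n : ℕ}

lemma restrict_isMinor (hR : R ⊆ M.E) : M ↾ R ≤m M :=
  ⟨∅, M.E \ R, by rw [contract_empty, delete_compl hR]⟩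

lemma Indep.encard_le_of_subset_closure (hI : M.Indep I) (hIX : I ⊆ M.closure X) :
    I.encard ≤ X.encard :=
  calc I.encard ≤ M.eRk (M.closure X) := hI.encard_le_eRk_of_subset hIX
    _ = M.eRk X := M.eRk_closure_eq X
    _ ≤ X.encard := M.eRk_le_encard X

lemma Indep.ncard_le_mrank [M.Finite] (hI : M.Indep I) : I.ncard ≤ mrank M := by
  have hbdd : BddAbove (range fun J : {J : Set α // M.Indep J ∧ J ⊆ M.E} ↦ J.1.ncard) := by
    refine ⟨M.E.ncard, ?_⟩
    rintro _ ⟨J, rfl⟩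
    exact ncard_le_ncard J.2.2 M.ground_finite
  exact le_ciSup hbdd ⟨I, hI, hI.subset_ground⟩

lemma mrank_le_of_forall_indep (h : ∀ I, M.Indep I → I.ncard ≤ n) : mrank M ≤ n :=
  haveI : Nonempty {I : Set α // M.Indep I ∧ I ⊆ M.E} := ⟨⟨∅, M.empty_indep, empty_subset _⟩⟩
  ciSup_le fun I ↦ h I.1 I.2.1

end Matroid

section

variable {α : Type*} {M N : Matroid α} {I T : Set α} {e : α} {l n : ℕ}

lemma hasLineMinor_iff : HasLineMinor M n ↔ ∃ N, N ≤m M ∧ IsUnif2 N n :=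
  ⟨fun ⟨C, D, h⟩ ↦ ⟨_, contract_delete_isMinor M C D, h⟩,
    fun ⟨_, ⟨C, D, hN⟩, h⟩ ↦ ⟨C, D, by rwa [hN] at h⟩⟩

lemma HasLineMinor.of_isMinor (h : HasLineMinor N n) (hNM : N ≤m M) : HasLineMinor M n := by
  obtain ⟨L, hLN, hL⟩ := hasLineMinor_iff.1 h
  exact hasLineMinor_iff.2 ⟨L, hLN.trans hNM, hL⟩

lemma msimple_restrict_iff : MSimple (M ↾ T) ↔ ∀ e ∈ T, ∀ f ∈ T, M.Indep {e, f} := by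
  refine forall₂_congr fun e he ↦ forall₂_congr fun f hf ↦ ?_
  rw [restrict_indep_iff, and_iff_left (pair_subset he hf : ({e, f} : Set α) ⊆ T)]

namespace MSimple

lemma indep_singleton (hM : MSimple M) (he : e ∈ M.E) : M.Indep {e} := by
  simpa using hM e he e he

lemma indep_of_ncard_le_two (hM : MSimple M) (hIE : I ⊆ M.E) (hfin : I.Finite)
    (hI : I.ncard ≤ 2) : M.Indep I := by
  obtain h0 | h1 | h2 : I.ncard = 0 ∨ I.ncard = 1 ∨ I.ncard = 2 := by omega
  · rw [(ncard_eq_zero hfin).1 h0]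
    exact M.empty_indep
  · obtain ⟨a, rfl⟩ := ncard_eq_one.1 h1
    exact hM.indep_singleton (hIE rfl)
  · obtain ⟨a, b, -, rfl⟩ := ncard_eq_two.1 h2
    exact hM a (hIE (by simp)) b (hIE (by simp))

lemma ncard_inter_closure_pair_le (hM : MSimple M) (hminor : ¬ HasLineMinor M (l + 2))
    (e f : α) : (M.E ∩ M.closure {e, f}).ncard ≤ l + 1 := by
  by_contra! hlarge
  obtain ⟨F, hF, hFcard⟩ := exists_subset_card_eq hlarge
  have hFfin : F.Finite := finite_of_ncard_pos (by omega)
  have hFE : F ⊆ M.E := hF.trans inter_subset_left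
  refine hminor (hasLineMinor_iff.2 ⟨M ↾ F, restrict_isMinor hFE, hFfin, hFcard, fun I hIF ↦ ?_⟩)
  rw [restrict_ground_eq] at hIF
  rw [restrict_indep_iff, and_iff_left hIF]
  refine ⟨fun hI ↦ ?_, fun ⟨hfin, hI⟩ ↦ hM.indep_of_ncard_le_two (hIF.trans hFE) hfin hI⟩
  have h2 : I.encard ≤ 2 :=
    calc I.encard ≤ ({e, f} : Set α).encard :=
          hI.encard_le_of_subset_closure (hIF.trans (hF.trans inter_subset_right))
      _ ≤ 2 := (encard_insert_le _ _).trans (by simp; norm_num)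
  have hfin : I.Finite := finite_of_encard_le_coe h2
  rw [← hfin.cast_ncard_eq] at h2
  exact ⟨hfin, by exact_mod_cast h2⟩

end MSimple

lemma Matroid.exists_msimple_restrict_forall_mem_closure (M : Matroid α) [M.Finite] :
    ∃ T ⊆ M.E, MSimple (M ↾ T) ∧ ∀ f, M.IsNonloop f → ∃ t ∈ T, f ∈ M.closure {t} := by
  set 𝒯 := {T | T ⊆ M.E ∧ MSimple (M ↾ T)}
  have h𝒯 : 𝒯.Finite := M.ground_finite.finite_subsets.subset fun T hT ↦ hT.1
  obtain ⟨T, ⟨hTE, hTs⟩, hmax⟩ :=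
    h𝒯.exists_maximal ⟨∅, empty_subset _, msimple_restrict_iff.2 (by simp)⟩
  refine ⟨T, hTE, hTs, fun f hf ↦ ?_⟩
  by_contra! hcl
  rw [msimple_restrict_iff] at hTs
  have hft : ∀ t ∈ T, M.Indep {f, t} := fun t ht ↦ by
    have htI : M.Indep {t} := by simpa using hTs t ht t ht
    have hne : f ∉ ({t} : Set α) := fun h ↦ hcl t ht (M.mem_closure_of_mem h htI.subset_ground)
    exact (htI.insert_indep_iff_of_notMem hne).2 ⟨hf.mem_ground, hcl t ht⟩
  have hins : insert f T ∈ 𝒯 := by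
    refine ⟨insert_subset hf.mem_ground hTE, msimple_restrict_iff.2 ?_⟩
    rintro x (rfl | hx) y (rfl | hy)
    · simpa using hf.indep
    · exact hft y hy
    · exact pair_comm x y ▸ hft x hx
    · exact hTs x hx y hy
  exact hcl f (hmax hins (subset_insert f T) (mem_insert f T))
    (M.mem_closure_of_mem rfl (singleton_subset_iff.2 hf.mem_ground))

lemma MSimple.exists_msimple_isMinor [M.Finite] (hM : MSimple M)
    (hminor : ¬ HasLineMinor M (l + 2)) (he : e ∈ M.E) :
    ∃ N, N ≤m M ∧ MSimple N ∧ mrank N < mrank M ∧ M.E.ncard ≤ l * N.E.ncard + 1 := by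
  have heN : M.IsNonloop e := Matroid.indep_singleton.1 (hM.indep_singleton he)
  obtain ⟨T, hTE, hTs, hcover⟩ := (M ／ {e}).exists_msimple_restrict_forall_mem_closure
  refine ⟨M ／ {e} ↾ T, ?_, hTs, ?_, ?_⟩
  · rw [← delete_compl hTE]
    exact contract_delete_isMinor _ _ _
  · have hrk : ∀ I, (M ／ {e} ↾ T).Indep I → I.ncard + 1 ≤ mrank M := fun I hI ↦ by
      obtain ⟨heI, hIe⟩ := heN.contractElem_indep_iff.1 hI.of_restrict
      have := hIe.ncard_le_mrank
      rwa [ncard_insert_of_notMem heI (hIe.finite.subset (subset_insert _ _))] at this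
    have hpos := hrk ∅ (empty_indep _)
    have := mrank_le_of_forall_indep fun I hI ↦ Nat.le_sub_of_add_le (hrk I hI)
    omega
  · have hlines : M.E \ {e} ⊆ ⋃ t ∈ T, M.closure {e, t} := fun f hf ↦ by
      have hfe : (M ／ {e}).IsNonloop f := by
        refine contract_isNonloop_iff.2 ⟨hf.1, ?_⟩
        have hef : M.Indep (insert f {e}) := pair_comm e f ▸ hM e he f hf.1
        exact ((heN.indep.insert_indep_iff_of_notMem hf.2).1 hef).2
      obtain ⟨t, ht, hft⟩ := hcover f hfe
      rw [contract_closure_eq, singleton_union, pair_comm] at hft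
      exact mem_biUnion ht hft.1
    have hline : ∀ t ∈ T, ((M.E \ {e}) ∩ M.closure {e, t}).ncard ≤ l := fun t ht ↦ by
      have := hM.ncard_inter_closure_pair_le hminor e t
      have heE : e ∈ M.E ∩ M.closure {e, t} :=
        ⟨he, M.mem_closure_of_mem (mem_insert e _) (pair_subset he (hTE ht).1)⟩
      rw [← inter_sdiff_right_comm, ncard_sdiff_singleton_of_mem heE]
      omega
    have := ncard_le_mul_ncard_of_subset_biUnion M.ground_finite.sdiff
      (M.ground_finite.subset (hTE.trans sdiff_subset)) hlines hline
    rw [restrict_ground_eq, ← ncard_sdiff_singleton_add_one he M.ground_finite]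
    omega

lemma kung_bound_succ {l : ℝ} (hl : l ≠ 1) (n : ℕ) :
    l * ((l ^ n - 1) / (l - 1)) + 1 = (l ^ (n + 1) - 1) / (l - 1) := by
  field_simp [sub_ne_zero.2 hl]
  ring

theorem MSimple.ncard_le_of_mrank_le (hl : 2 ≤ l) (n : ℕ) (M : Matroid α) [M.Finite]
    (hM : MSimple M) (hminor : ¬ HasLineMinor M (l + 2)) (hrank : mrank M ≤ n) :
    (M.E.ncard : ℝ) ≤ ((l : ℝ) ^ n - 1) / ((l : ℝ) - 1) := by
  have hl1 : (1 : ℝ) < l := by exact_mod_cast hl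
  induction n generalizing M with
  | zero =>
    suffices M.E = ∅ by simp [this]
    by_contra! ⟨e, he⟩
    have := (hM.indep_singleton he).ncard_le_mrank
    rw [ncard_singleton] at this
    omega
  | succ n ih =>
    rcases M.E.eq_empty_or_nonempty with hE | ⟨e, he⟩
    · rw [hE, ncard_empty, Nat.cast_zero]
      exact div_nonneg (sub_nonneg.2 (one_le_pow₀ hl1.le)) (sub_nonneg.2 hl1.le)
    obtain ⟨N, hNM, hN, hNrank, hcard⟩ := hM.exists_msimple_isMinor hminor he
    have : N.Finite := ⟨M.ground_finite.subset hNM.subset⟩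
    have hNbound := ih N hN (fun h ↦ hminor (h.of_isMinor hNM)) (by omega)
    calc (M.E.ncard : ℝ) ≤ l * N.E.ncard + 1 := by exact_mod_cast hcard
      _ ≤ l * ((l ^ n - 1) / (l - 1)) + 1 := by gcongr
      _ = (l ^ (n + 1) - 1) / (l - 1) := kung_bound_succ hl1.ne' n

end

/-- Kung's theorem: a simple matroid with no `U_{2,l+2}`-minor has at most
`(l^r - 1)/(l - 1)` elements. -/
theorem stmt0 {α : Type*} (l : ℕ) (hl : 2 ≤ l) (M : Matroid α) [M.Finite]
    (hsimple : MSimple M) (hminor : ¬ HasLineMinor M (l + 2)) :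
    (M.E.ncard : ℝ) ≤ ((l : ℝ) ^ mrank M - 1) / ((l : ℝ) - 1) :=
  hsimple.ncard_le_of_mrank_le hl (mrank M) M hminor le_rfl
end

section
/- If M is a round matroid that contains a restriction isomorphic to U_{2,q+2} and a restriction isomorphic to PG(2,q), where q is a prime power, then M has a U_{2,q^2+1}-minor. -/
/-!
Contract a maximal set `C`, disjoint from `P ∪ L`, whose contraction leaves `M ↾ P` and `M ↾ L`
unchanged. By maximality every element of `M ／ C` lies in the closure of `P` or of `L`, so
roundness forces `P` to span `M ／ C`, which therefore has rank 3. The points of `L` that are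
parallel to a point of `P` are at most as many as the points of `P` on the line spanned by `L`,
i.e. at most `q + 1`; so some `p ∈ L` is parallel to no point of `P`. Contracting `p` makes two
points of `P` parallel exactly when they are collinear with `p`. Any two lines of the plane meet,
so all points of `P` that become parallel to another one lie on a single line through `p`, which
holds at most `q + 1` of them. Keeping one of these and all other points of `P` gives `q² + 1`
points that are pairwise non-parallel in the rank-2 matroid `M ／ C ／ p`: a `U_{2,q²+1}`.
-/

open Matroid Set

open Module

section Round

variable {α : Type*} {M : Matroid α} {C I X : Set α}

lemma mrk_eq_ncard_of_isBasis' [M.Finite] (hI : M.IsBasis' I X) : mrk M X = I.ncard := by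
  have hle : ∀ J : {J : Set α // M.Indep J ∧ J ⊆ X}, J.1.ncard ≤ I.ncard := fun ⟨J, hJ, hJX⟩ => by
    have hJI : J.encard ≤ I.encard := hI.encard_eq_eRk ▸ hJ.encard_le_eRk_of_subset hJX
    rwa [← (M.set_finite J hJ.subset_ground).cast_ncard_eq,
      ← (M.set_finite I hI.indep.subset_ground).cast_ncard_eq, Nat.cast_le] at hJI
  let I' : {J : Set α // M.Indep J ∧ J ⊆ X} := ⟨I, hI.indep, hI.subset⟩
  exact le_antisymm (@ciSup_le _ _ _ ⟨I'⟩ _ _ hle) (le_ciSup ⟨_, forall_mem_range.2 hle⟩ I')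

lemma mrk_lt_mrank_of_not_spanning [M.Finite] (hX : ¬ M.Spanning X) (hXE : X ⊆ M.E) :
    mrk M X < mrank M := by
  obtain ⟨I, hI⟩ := M.exists_isBasis' X
  obtain ⟨B, hB, hIB⟩ := hI.indep.exists_isBase_superset
  have hIB' : I ⊂ B := hIB.ssubset_of_ne fun h => hX ((h ▸ hB).spanning.superset hI.subset)
  rw [mrank, mrk_eq_ncard_of_isBasis' hI, mrk_eq_ncard_of_isBasis' hB.isBasis_ground.isBasis']
  exact ncard_lt_ncard hIB' (M.set_finite B hB.subset_ground)

lemma Round.spanning_or_spanning_sdiff [M.Finite] (h : Round M) (hX : X ⊆ M.E) :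
    M.Spanning X ∨ M.Spanning (M.E \ X) := by
  by_contra! hns
  exact h ⟨X, M.E \ X, union_sdiff_cancel hX, disjoint_sdiff_right,
    mrk_lt_mrank_of_not_spanning hns.1 hX, mrk_lt_mrank_of_not_spanning hns.2 sdiff_subset⟩

lemma Round.contract_spanning_or_spanning_sdiff [M.Finite] (h : Round M) (hC : C ⊆ M.E)
    (hX : X ⊆ (M ／ C).E) : (M ／ C).Spanning X ∨ (M ／ C).Spanning ((M ／ C).E \ X) := by
  rw [contract_ground] at hX ⊢
  rw [contract_spanning_iff, contract_spanning_iff, and_iff_left (subset_sdiff.1 hX).2,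
    and_iff_left (disjoint_sdiff_left.mono_left sdiff_subset), sdiff_sdiff, union_comm C X]
  refine (h.spanning_or_spanning_sdiff (union_subset (hX.trans sdiff_subset) hC)).imp id
    fun hs => hs.superset subset_union_left (union_subset sdiff_subset hC)

end Round

section Contract

variable {α : Type*} {M : Matroid α} {L P X : Set α} {e : α}

lemma contractElem_restrict_eq_of_notMem_closure (he : e ∉ M.closure X) :
    M ／ {e} ↾ X = M ↾ X := by
  by_cases heE : e ∈ M.E
  · have hnl : M.IsNonloop e := (isNonloop_iff_mem_compl_loops).2
      ⟨heE, fun hl => he (M.closure_mono (empty_subset X) hl)⟩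
    refine ext_indep rfl fun I _ => ?_
    simp only [restrict_indep_iff, hnl.contractElem_indep_iff, and_congr_left_iff]
    intro hIX
    have heI : e ∉ I := fun heI => he (M.mem_closure_of_mem' (hIX heI) heE)
    refine ⟨fun h => h.2.subset (subset_insert e I), fun hI => ⟨heI, ?_⟩⟩
    exact (hI.insert_indep_iff_of_notMem heI).2 ⟨heE, fun h => he (M.closure_mono hIX h)⟩
  · rw [contractElem_eq_self heE]

lemma Round.exists_contract_spanning [M.Finite] (h : Round M) (hP : P ⊆ M.E)
    (hrk : M.eRk L < M.eRk P) :
    ∃ C, M ／ C ↾ P = M ↾ P ∧ M ／ C ↾ L = M ↾ L ∧ (M ／ C).Spanning P := by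
  set G := {C | C ⊆ M.E \ (P ∪ L) ∧ M ／ C ↾ P = M ↾ P ∧ M ／ C ↾ L = M ↾ L}
  have hGfin : G.Finite := M.ground_finite.finite_subsets.subset fun C hC => hC.1.trans sdiff_subset
  obtain ⟨C, hCmax⟩ := hGfin.exists_maximal ⟨∅, empty_subset _, by simp, by simp⟩
  obtain ⟨hCE, hCP, hCL⟩ := hCmax.prop
  set N := M ／ C
  have hPN : P ⊆ N.E := subset_sdiff.2 ⟨hP, (subset_sdiff.1 hCE).2.symm.mono_left subset_union_left⟩
  have hcover : N.E \ N.closure P ⊆ N.closure L := by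
    rintro e ⟨he, heP⟩
    by_contra heL
    have heC : insert e C ∈ G := by
      refine ⟨insert_subset ⟨he.1, ?_⟩ hCE, ?_, ?_⟩
      · rintro (heP' | heL')
        exacts [heP (N.subset_closure P hPN heP'), heL (N.mem_closure_of_mem' heL' he)]
      · rw [← union_singleton, ← contract_contract,
          contractElem_restrict_eq_of_notMem_closure heP, hCP]
      · rw [← union_singleton, ← contract_contract,
          contractElem_restrict_eq_of_notMem_closure heL, hCL]
    exact he.2 (hCmax.2 heC (subset_insert e C) (mem_insert e C))
  refine ⟨C, hCP, hCL, ?_⟩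
  rcases h.contract_spanning_or_spanning_sdiff (hCE.trans sdiff_subset) (N.closure_subset_ground P)
    with hs | hs
  · exact (closure_spanning_iff hPN).1 hs
  · have hLs : N.eRk L = N.eRank := by
      rw [← eRk_closure_eq, (hs.superset hcover (N.closure_subset_ground L)).eRk_eq]
    rw [← eRank_restrict, ← eRank_restrict, ← hCP, ← hCL, eRank_restrict, eRank_restrict,
      hLs] at hrk
    exact ((N.eRk_le_eRank P).not_gt hrk).elim

lemma Matroid.IsNonloop.eRank_contractElem_add_one (he : M.IsNonloop e) :
    (M ／ {e}).eRank + 1 = M.eRank := by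
  obtain ⟨B, hB⟩ := (M ／ {e}).exists_isBase
  obtain ⟨hBe, hdisj⟩ := he.indep.contract_isBase_iff.1 hB
  rw [← hB.encard_eq_eRank, ← hBe.encard_eq_eRank, encard_union_eq hdisj, encard_singleton]

end Contract

section Lines

variable {α : Type*} {M K : Matroid α} {A B C R : Set α} {n : ℕ} {x y : α}

lemma IsUnif2.eRank_le_two (h : IsUnif2 K n) : K.eRank ≤ 2 := by
  obtain ⟨B, hB⟩ := K.exists_isBase
  rw [← hB.encard_eq_eRank, show (2 : ℕ∞) = (2 : ℕ) from rfl, encard_le_coe_iff_finite_ncard_le]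
  exact (h.2.2 B hB.subset_ground).1 hB.indep

lemma IsUnif2.indep_pair (h : IsUnif2 K n) (hx : x ∈ K.E) (hy : y ∈ K.E) : K.Indep {x, y} :=
  (h.2.2 _ (pair_subset hx hy)).2 ⟨toFinite _, (ncard_insert_le x {y}).trans (by simp)⟩

lemma isUnif2_restrict (hK : K.eRank ≤ 2) (hR : R.Finite) (hRl : ∀ x ∈ R, K.IsNonloop x)
    (hRi : ∀ x ∈ R, ∀ y ∈ R, x ≠ y → K.Indep {x, y}) : IsUnif2 (K ↾ R) R.ncard := by
  refine ⟨hR, rfl, fun I (hIR : I ⊆ R) => ?_⟩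
  rw [restrict_indep_iff, and_iff_left hIR, ← encard_le_coe_iff_finite_ncard_le]
  refine ⟨fun hI => hI.encard_le_eRank.trans hK, fun hI => ?_⟩
  rw [encard_le_coe_iff_finite_ncard_le] at hI
  obtain h0 | h1 | h2 : I.ncard = 0 ∨ I.ncard = 1 ∨ I.ncard = 2 := by omega
  · rw [(ncard_eq_zero hI.1).1 h0]
    exact K.empty_indep
  · obtain ⟨x, rfl⟩ := ncard_eq_one.1 h1
    exact (hRl x (hIR rfl)).indep
  · obtain ⟨x, y, hxy, rfl⟩ := ncard_eq_two.1 h2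
    exact hRi x (hIR (mem_insert _ _)) y (hIR (by simp)) hxy

lemma ncard_le_ncard_of_forall_exists_mem_closure_singleton (hB : B.Finite)
    (hBl : ∀ y ∈ B, M.IsNonloop y) (hA : ∀ x ∈ A, ∀ x' ∈ A, M.Indep {x, x'})
    (h : ∀ x ∈ A, ∃ y ∈ B, y ∈ M.closure {x}) : A.ncard ≤ B.ncard := by
  choose! g hgB hgx using h
  refine ncard_le_ncard_of_injOn g hgB (fun x hx x' hx' hgg => ?_) hB
  have hnl : ∀ x ∈ A, M.IsNonloop x := fun x hx => indep_singleton.1 (by simpa using hA x hx x hx)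
  have hcl : M.closure {x} = M.closure {x'} := by
    rw [← (hBl _ (hgB x hx)).closure_eq_of_mem_closure (hgx x hx), hgg,
      (hBl _ (hgB x' hx')).closure_eq_of_mem_closure (hgx x' hx')]
  exact (((hnl x hx).closure_eq_closure_iff_eq_or_dep (hnl x' hx')).1 hcl).resolve_right
    (not_not.2 (hA x hx x' hx'))

lemma hasLineMinor_of_contract_restrict (hR : R ⊆ (M ／ C).E) (h : IsUnif2 (M ／ C ↾ R) n) :
    HasLineMinor M n := by
  refine ⟨C, (M ／ C).E \ R, ?_⟩
  show IsUnif2 (M ／ C ↾ ((M ／ C).E \ ((M ／ C).E \ R))) n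
  rwa [sdiff_sdiff_cancel_left hR]

end Lines

section Subspaces

variable {F V : Type*} [Field F] [AddCommGroup V] [Module F V] {U W W₁ W₂ : Submodule F V}

lemma ncard_setOf_finrank_eq_one [Finite F] {n : ℕ} (h : finrank F V = n) :
    {U : Submodule F V | finrank F U = 1}.ncard = ∑ i ∈ Finset.range n, Nat.card F ^ i := by
  rw [← Nat.card_coe_set_eq, ← Projectivization.card_of_finrank F V h]
  exact Nat.card_congr (Projectivization.equivSubmodule F V).symm

lemma ncard_setOf_finrank_eq_one_le [Finite F] (hW : finrank F W = 2) :
    {U : Submodule F V | finrank F U = 1 ∧ U ≤ W}.ncard = Nat.card F + 1 := by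
  have himage : (fun U' => U'.map W.subtype) '' {U' : Submodule F W | finrank F U' = 1} =
      {U : Submodule F V | finrank F U = 1 ∧ U ≤ W} := by
    ext U
    constructor
    · rintro ⟨U', hU', rfl⟩
      exact ⟨(Submodule.finrank_map_subtype_eq W U').trans hU', Submodule.map_subtype_le W U'⟩
    · rintro ⟨hU, hUW⟩
      have hmap : (U.comap W.subtype).map W.subtype = U := by
        rw [Submodule.map_comap_subtype, inf_eq_right.2 hUW]
      refine ⟨_, ?_, hmap⟩
      rw [mem_ofPred_eq, ← Submodule.finrank_map_subtype_eq, hmap, hU]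
  rw [← himage, (Submodule.map_injective_of_injective W.injective_subtype).injOn.ncard_image,
    ncard_setOf_finrank_eq_one hW]
  simp [Finset.sum_range_succ, add_comm]

lemma exists_finrank_eq_one_not_le (h : finrank F W < finrank F V) :
    ∃ U : Submodule F V, finrank F U = 1 ∧ ¬ U ≤ W := by
  have hW : W ≠ ⊤ := fun hW => by
    rw [hW, finrank_top] at h
    exact h.false
  obtain ⟨v, -, hv⟩ := SetLike.exists_of_lt (lt_top_iff_ne_top.2 hW)
  refine ⟨F ∙ v, finrank_span_singleton ?_, by rwa [Submodule.span_singleton_le_iff_mem]⟩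
  rintro rfl
  exact hv W.zero_mem

variable [FiniteDimensional F V]

lemma finrank_sup_eq_add_one_of_not_le (hU : finrank F U = 1) (hUW : ¬ U ≤ W) :
    finrank F ↥(W ⊔ U) = finrank F W + 1 := by
  have hinf : W ⊓ U = ⊥ := by
    rw [← Submodule.finrank_eq_zero]
    have := Submodule.finrank_lt_finrank_of_lt
      (inf_le_right.lt_of_ne fun h => hUW (inf_eq_right.1 h))
    omega
  have := Submodule.finrank_sup_add_finrank_inf_eq W U
  rw [hinf, finrank_bot, hU] at this
  omega

lemma exists_finrank_eq_one_le_inf (h : finrank F V < finrank F W₁ + finrank F W₂) :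
    ∃ U : Submodule F V, finrank F U = 1 ∧ U ≤ W₁ ∧ U ≤ W₂ := by
  have hsum := Submodule.finrank_sup_add_finrank_inf_eq W₁ W₂
  have hsup := Submodule.finrank_le (W₁ ⊔ W₂)
  obtain ⟨v, hv, hv0⟩ := Submodule.exists_mem_ne_zero_of_ne_bot (p := W₁ ⊓ W₂) fun hbot => by
    rw [hbot, finrank_bot] at hsum
    omega
  exact ⟨F ∙ v, finrank_span_singleton hv0, (Submodule.span_singleton_le_iff_mem _ _).2 hv.1,
    (Submodule.span_singleton_le_iff_mem _ _).2 hv.2⟩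

end Subspaces

structure IsProjRep {α F V : Type*} [Field F] [AddCommGroup V] [Module F V] (N : Matroid α)
    (P : Set α) (f : α → Submodule F V) : Prop where
  bijOn : BijOn f P {W : Submodule F V | finrank F W = 1}
  indep_iff : ∀ I ⊆ P, N.Indep I ↔ I.Finite ∧ finrank F ↥(⨆ x ∈ I, f x) = I.ncard

lemma IsProjGeom.exists_isProjRep {α F : Type*} [Field F] {N : Matroid α} {P : Set α} {n : ℕ}
    (h : IsProjGeom (N ↾ P) n F) : ∃ f : α → Submodule F (Fin n → F), IsProjRep N P f := by
  obtain ⟨f, hbij, hind⟩ := h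
  exact ⟨f, hbij, fun I hI => by simpa [hI] using hind I hI⟩

namespace IsProjRep

variable {α F V : Type*} [Field F] [AddCommGroup V] [Module F V]
  {N N' : Matroid α} {L P X : Set α} {f : α → Submodule F V} {p x y z x' y' : α}

lemma of_restrict_eq (hf : IsProjRep N P f) (h : N ↾ P = N' ↾ P) : IsProjRep N' P f := by
  refine ⟨hf.bijOn, fun I hI => ?_⟩
  have hI' := congrArg (·.Indep I) h
  simp only [restrict_indep_iff, and_iff_left hI] at hI'
  rw [← hI', hf.indep_iff I hI]

lemma finrank_eq_one (hf : IsProjRep N P f) (hx : x ∈ P) : finrank F (f x) = 1 :=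
  hf.bijOn.mapsTo hx

lemma isNonloop (hf : IsProjRep N P f) (hx : x ∈ P) : N.IsNonloop x := by
  rw [← indep_singleton, hf.indep_iff _ (singleton_subset_iff.2 hx), iSup_singleton,
    ncard_singleton, hf.finrank_eq_one hx]
  exact ⟨finite_singleton x, rfl⟩

lemma subset_ground (hf : IsProjRep N P f) : P ⊆ N.E :=
  fun _ hx => (hf.isNonloop hx).mem_ground

lemma ncard_eq [Finite F] (hf : IsProjRep N P f) {n : ℕ} (hV : finrank F V = n) :
    P.ncard = ∑ i ∈ Finset.range n, Nat.card F ^ i := by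
  rw [← ncard_setOf_finrank_eq_one hV, ← hf.bijOn.image_eq, hf.bijOn.injOn.ncard_image]

variable [FiniteDimensional F V]

lemma finrank_sup_eq_two (hf : IsProjRep N P f) (hx : x ∈ P) (hy : y ∈ P) (hxy : x ≠ y) :
    finrank F ↥(f x ⊔ f y) = 2 := by
  have hyx : ¬ f y ≤ f x := fun hle => hxy <| hf.bijOn.injOn hx hy <| Eq.symm <|
    Submodule.eq_of_le_of_finrank_eq hle (by rw [hf.finrank_eq_one hx, hf.finrank_eq_one hy])
  rw [finrank_sup_eq_add_one_of_not_le (hf.finrank_eq_one hy) hyx, hf.finrank_eq_one hx]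

lemma finite [Finite F] (hf : IsProjRep N P f) : P.Finite := by
  have : Finite V := Module.finite_of_finite F
  have : Finite (Submodule F V) := Finite.of_injective _ SetLike.coe_injective
  exact Finite.of_finite_image (hf.bijOn.image_eq ▸ toFinite _) hf.bijOn.injOn

lemma indep_pair (hf : IsProjRep N P f) (hx : x ∈ P) (hy : y ∈ P) (hxy : x ≠ y) :
    N.Indep {x, y} := by
  rw [hf.indep_iff _ (pair_subset hx hy), iSup_pair, ncard_pair hxy,
    hf.finrank_sup_eq_two hx hy hxy]
  exact ⟨toFinite _, rfl⟩

lemma notMem_closure_singleton (hf : IsProjRep N P f) (hx : x ∈ P) (hy : y ∈ P) (hxy : x ≠ y) :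
    y ∉ N.closure {x} := by
  have h := ((hf.isNonloop hx).indep.insert_indep_iff_of_notMem hxy.symm).1
  rw [pair_comm] at h
  exact (h (hf.indep_pair hx hy hxy)).2

lemma indep_insert_pair_iff (hf : IsProjRep N P f) (hx : x ∈ P) (hy : y ∈ P) (hz : z ∈ P)
    (hxy : x ≠ y) (hzx : z ≠ x) (hzy : z ≠ y) :
    N.Indep (insert z {x, y}) ↔ ¬ f z ≤ f x ⊔ f y := by
  rw [hf.indep_iff _ (insert_subset hz (pair_subset hx hy)), iSup_insert, iSup_pair,
    ncard_insert_of_notMem (by simp [hzx, hzy]), ncard_pair hxy, and_iff_right (toFinite _)]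
  by_cases hle : f z ≤ f x ⊔ f y
  · rw [sup_eq_right.2 hle, hf.finrank_sup_eq_two hx hy hxy]
    simp [hle]
  · rw [sup_comm, finrank_sup_eq_add_one_of_not_le (hf.finrank_eq_one hz) hle,
      hf.finrank_sup_eq_two hx hy hxy]
    simp [hle]

lemma mem_closure_pair_iff (hf : IsProjRep N P f) (hx : x ∈ P) (hy : y ∈ P) (hz : z ∈ P)
    (hxy : x ≠ y) : z ∈ N.closure {x, y} ↔ f z ≤ f x ⊔ f y := by
  by_cases hzxy : z ∈ ({x, y} : Set α)
  · refine iff_of_true (N.mem_closure_of_mem' hzxy (hf.subset_ground hz)) ?_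
    rcases hzxy with rfl | rfl
    exacts [le_sup_left, le_sup_right]
  · obtain ⟨hzx, hzy⟩ : z ≠ x ∧ z ≠ y := by simpa using hzxy
    rw [(hf.indep_pair hx hy hxy).mem_closure_iff_of_notMem hzxy, ← not_indep_iff
      (insert_subset (hf.subset_ground hz) (pair_subset (hf.subset_ground hx)
      (hf.subset_ground hy))), hf.indep_insert_pair_iff hx hy hz hxy hzx hzy, not_not]

lemma eRk_le_finrank (hf : IsProjRep N P f) : N.eRk P ≤ finrank F V := by
  refine eRk_le_iff.2 fun I hIP hI => ?_
  obtain ⟨hIfin, hrk⟩ := (hf.indep_iff I hIP).1 hI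
  rw [← hIfin.cast_ncard_eq, ← hrk]
  exact_mod_cast Submodule.finrank_le _

lemma three_le_eRk (hf : IsProjRep N P f) (hV : 3 ≤ finrank F V) : 3 ≤ N.eRk P := by
  obtain ⟨U₁, hU₁, -⟩ := exists_finrank_eq_one_not_le (W := (⊥ : Submodule F V))
    (by rw [finrank_bot]; omega)
  obtain ⟨x, hx, rfl⟩ := hf.bijOn.surjOn hU₁
  obtain ⟨U₂, hU₂, hxU₂⟩ := exists_finrank_eq_one_not_le (W := f x) (by rw [hU₁]; omega)
  obtain ⟨y, hy, rfl⟩ := hf.bijOn.surjOn hU₂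
  have hxy : x ≠ y := by rintro rfl; exact hxU₂ le_rfl
  obtain ⟨U₃, hU₃, hU₃le⟩ := exists_finrank_eq_one_not_le (W := f x ⊔ f y)
    (by rw [hf.finrank_sup_eq_two hx hy hxy]; omega)
  obtain ⟨z, hz, rfl⟩ := hf.bijOn.surjOn hU₃
  have hzx : z ≠ x := by rintro rfl; exact hU₃le le_sup_left
  have hzy : z ≠ y := by rintro rfl; exact hU₃le le_sup_right
  have hind := (hf.indep_insert_pair_iff hx hy hz hxy hzx hzy).2 hU₃le
  calc (3 : ℕ∞) = (insert z {x, y} : Set α).encard := by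
        rw [encard_insert_of_notMem (by simp [hzx, hzy]), encard_pair hxy]; rfl
    _ ≤ N.eRk P := hind.encard_le_eRk_of_subset (insert_subset hz (pair_subset hx hy))

lemma ncard_le_of_eRk_le_two [Finite F] (hf : IsProjRep N P f) (hX : X ⊆ P) (h : N.eRk X ≤ 2) :
    X.ncard ≤ Nat.card F + 1 := by
  obtain hs | ⟨x, hx, y, hy, hxy⟩ := X.subsingleton_or_nontrivial
  · rcases hs.eq_empty_or_singleton with rfl | ⟨a, rfl⟩ <;> simp
  have hle : ∀ z ∈ X, f z ≤ f x ⊔ f y := by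
    intro z hz
    by_contra hzxy
    have hzx : z ≠ x := by rintro rfl; exact hzxy le_sup_left
    have hzy : z ≠ y := by rintro rfl; exact hzxy le_sup_right
    have h3 := ((hf.indep_insert_pair_iff (hX hx) (hX hy) (hX hz) hxy hzx hzy).2
      hzxy).encard_le_eRk_of_subset (insert_subset hz (pair_subset hx hy))
    rw [encard_insert_of_notMem (by simp [hzx, hzy]), encard_pair hxy] at h3
    exact absurd (h3.trans h) (by norm_num)
  have hline := ncard_setOf_finrank_eq_one_le (hf.finrank_sup_eq_two (hX hx) (hX hy) hxy)
  refine hline ▸ ncard_le_ncard_of_injOn f (fun z hz => ⟨hf.finrank_eq_one (hX hz), hle z hz⟩)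
    (hf.bijOn.injOn.mono hX) (finite_of_ncard_pos (by omega))

lemma exists_mem_closure_pair_inter (hf : IsProjRep N P f) (hV : finrank F V = 3) (hx : x ∈ P)
    (hx' : x' ∈ P) (hy : y ∈ P) (hy' : y' ∈ P) (hxx' : x ≠ x') (hyy' : y ≠ y') :
    ∃ z ∈ P, z ∈ N.closure {x, x'} ∧ z ∈ N.closure {y, y'} := by
  obtain ⟨U, hU, hUx, hUy⟩ := exists_finrank_eq_one_le_inf (W₁ := f x ⊔ f x') (W₂ := f y ⊔ f y')
    (by rw [hV, hf.finrank_sup_eq_two hx hx' hxx', hf.finrank_sup_eq_two hy hy' hyy']; norm_num)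
  obtain ⟨z, hz, rfl⟩ := hf.bijOn.surjOn hU
  exact ⟨z, hz, (hf.mem_closure_pair_iff hx hx' hz hxx').2 hUx,
    (hf.mem_closure_pair_iff hy hy' hz hyy').2 hUy⟩

lemma closure_pair_eq_of_mem_closure (hf : IsProjRep N P f) (hx : x ∈ P) (hy : y ∈ P)
    (hxy : x ≠ y) (hyp : y ∈ N.closure {x, p}) : N.closure {x, y} = N.closure {x, p} := by
  rw [pair_comm x y, pair_comm x p]
  exact closure_insert_congr ⟨by rwa [pair_comm], hf.notMem_closure_singleton hx hy hxy⟩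

lemma closure_pair_eq_closure_pair (hf : IsProjRep N P f) (hV : finrank F V = 3)
    (hp : ∀ z ∈ P, z ∉ N.closure {p}) (hx : x ∈ P) (hy : y ∈ P) (hx' : x' ∈ P) (hy' : y' ∈ P)
    (hxy : x ≠ y) (hx'y' : x' ≠ y') (hyp : y ∈ N.closure {x, p}) (hy'p : y' ∈ N.closure {x', p}) :
    N.closure {x, p} = N.closure {x', p} := by
  obtain ⟨z, hz, hzx, hzx'⟩ := hf.exists_mem_closure_pair_inter hV hx hy hx' hy' hxy hx'y'
  rw [hf.closure_pair_eq_of_mem_closure hx hy hxy hyp] at hzx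
  rw [hf.closure_pair_eq_of_mem_closure hx' hy' hx'y' hy'p] at hzx'
  rw [← closure_insert_congr ⟨hzx, hp z hz⟩, closure_insert_congr ⟨hzx', hp z hz⟩]

lemma exists_subset_forall_notMem_closure_pair [Finite F] (hf : IsProjRep N P f)
    (hV : finrank F V = 3) (hp : ∀ z ∈ P, z ∉ N.closure {p}) :
    ∃ R ⊆ P, Nat.card F ^ 2 + 1 ≤ R.ncard ∧ ∀ x ∈ R, ∀ y ∈ R, x ≠ y → y ∉ N.closure {x, p} := by
  have hPcard : P.ncard = Nat.card F ^ 2 + Nat.card F + 1 := by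
    rw [hf.ncard_eq hV]
    simp [Finset.sum_range_succ]
    ring
  have hPfin : P.Finite := hf.finite
  set S := {x ∈ P | ∃ y ∈ P, x ≠ y ∧ y ∈ N.closure {x, p}}
  have hSP : S ⊆ P := sep_subset _ _
  have hmemS : ∀ x ∈ P, ∀ y ∈ P, x ≠ y → y ∈ N.closure {x, p} → x ∈ S ∧ y ∈ S :=
    fun x hx y hy hxy hyx => ⟨⟨hx, y, hy, hxy, hyx⟩,
      ⟨hy, x, hx, hxy.symm, (closure_exchange ⟨hyx, hp y hy⟩).1⟩⟩
  obtain hS | ⟨s, hs, t, ht, hst, hts⟩ := S.eq_empty_or_nonempty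
  · refine ⟨P, subset_rfl, by omega, fun x hx y hy hxy hyx => ?_⟩
    exact (eq_empty_iff_forall_notMem.1 hS) x (hmemS x hx y hy hxy hyx).1
  have hSline : S ⊆ N.closure {s, p} := by
    rintro x ⟨hx, y, hy, hxy, hyx⟩
    rw [hf.closure_pair_eq_closure_pair hV hp hs ht hx hy hst hxy hts hyx]
    exact N.mem_closure_of_mem' (mem_insert x _) (hf.subset_ground hx)
  have hScard : S.ncard ≤ Nat.card F + 1 := by
    refine hf.ncard_le_of_eRk_le_two hSP ?_
    calc N.eRk S ≤ N.eRk {s, p} := (N.eRk_mono hSline).trans_eq (N.eRk_closure_eq _)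
      _ ≤ ({s, p} : Set α).encard := N.eRk_le_encard _
      _ ≤ 2 := (encard_insert_le _ _).trans (by simp [one_add_one_eq_two])
  refine ⟨insert s (P \ S), insert_subset hs sdiff_subset, ?_, ?_⟩
  · have hsS : s ∈ S := ⟨hs, t, ht, hst, hts⟩
    rw [ncard_insert_of_notMem (fun h => h.2 hsS) (hPfin.subset sdiff_subset),
      ncard_sdiff hSP (hPfin.subset hSP)]
    have := ncard_le_ncard hSP hPfin
    omega
  · have hsub : insert s (P \ S) ⊆ P := insert_subset hs sdiff_subset
    rintro x hx y hy hxy hyx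
    obtain ⟨hxS, hyS⟩ := hmemS x (hsub hx) y (hsub hy) hxy hyx
    rcases hx with rfl | hx
    · rcases hy with rfl | hy
      exacts [hxy rfl, hy.2 hyS]
    · exact hx.2 hxS

lemma exists_mem_forall_notMem_closure_singleton [Finite F] (hf : IsProjRep N P f)
    (hL : IsUnif2 (N ↾ L) (Nat.card F + 2)) : ∃ p ∈ L, ∀ y ∈ P, y ∉ N.closure {p} := by
  by_contra! hbad
  have hLrk : N.eRk (N.closure L) ≤ 2 := by
    rw [eRk_closure_eq, ← eRank_restrict]
    exact hL.eRank_le_two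
  have hLcard : L.ncard ≤ (P ∩ N.closure L).ncard :=
    ncard_le_ncard_of_forall_exists_mem_closure_singleton (hf.finite.subset inter_subset_left)
      (fun y hy => hf.isNonloop hy.1) (fun x hx y hy => (hL.indep_pair hx hy).of_restrict)
      fun x hx => by
        obtain ⟨y, hy, hyx⟩ := hbad x hx
        exact ⟨y, ⟨hy, N.closure_subset_closure (singleton_subset_iff.2 hx) hyx⟩, hyx⟩
  have := hf.ncard_le_of_eRk_le_two inter_subset_left
    ((N.eRk_mono inter_subset_right).trans hLrk)
  have : L.ncard = Nat.card F + 2 := hL.2.1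
  omega

lemma exists_isUnif2_contractElem_restrict [Finite F] (hf : IsProjRep N P f)
    (hV : finrank F V = 3) (hPs : N.Spanning P) (hL : IsUnif2 (N ↾ L) (Nat.card F + 2)) :
    ∃ p ∈ L, ∃ R ⊆ (N ／ {p}).E, IsUnif2 (N ／ {p} ↾ R) (Nat.card F ^ 2 + 1) := by
  obtain ⟨p, hpL, hp⟩ := hf.exists_mem_forall_notMem_closure_singleton hL
  have hpnl : N.IsNonloop p :=
    indep_singleton.1 (by simpa using (hL.indep_pair hpL hpL).of_restrict)
  obtain ⟨R₀, hR₀P, hR₀card, hR₀⟩ := hf.exists_subset_forall_notMem_closure_pair hV hp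
  obtain ⟨R, hRR₀, hRcard⟩ := exists_subset_card_eq hR₀card
  have hRl : ∀ x ∈ R, (N ／ {p}).IsNonloop x := fun x hx =>
    contract_isNonloop_iff.2 ⟨hf.subset_ground (hR₀P (hRR₀ hx)), hp x (hR₀P (hRR₀ hx))⟩
  have hrk : (N ／ {p}).eRank ≤ 2 := by
    have h3 : N.eRank ≤ 3 := hPs.eRk_eq ▸ hf.eRk_le_finrank.trans_eq (by rw [hV]; rfl)
    rw [← hpnl.eRank_contractElem_add_one, show (3 : ℕ∞) = 2 + 1 from rfl] at h3
    exact (ENat.add_le_add_iff_right ENat.one_ne_top).1 h3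
  refine ⟨p, hpL, R, fun x hx => (hRl x hx).mem_ground, hRcard ▸ isUnif2_restrict hrk
    (finite_of_ncard_pos (by omega)) hRl fun x hx y hy hxy => ?_⟩
  rw [pair_comm]
  refine ((hRl x hx).indep.insert_indep_iff_of_notMem hxy.symm).2 ⟨(hRl y hy).mem_ground, ?_⟩
  rw [contract_closure_eq, singleton_union]
  exact fun h => hR₀ x (hRR₀ hx) y (hRR₀ hy) hxy h.1

end IsProjRep

theorem stmt3_general {α : Type*} (M : Matroid α) [M.Finite] (F : Type) [Field F] [Fintype F]
    (hround : Round M) (L P : Set α) (hP : P ⊆ M.E)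
    (hLu : IsUnif2 (M ↾ L) (Fintype.card F + 2)) (hPG : IsProjGeom (M ↾ P) 3 F) :
    HasLineMinor M (Fintype.card F ^ 2 + 1) := by
  obtain ⟨f, hf⟩ := hPG.exists_isProjRep
  have hV : finrank F (Fin 3 → F) = 3 := finrank_fin_fun F
  have hLP : M.eRk L < M.eRk P := calc
    M.eRk L ≤ 2 := eRank_restrict M L ▸ hLu.eRank_le_two
    _ < 3 := by norm_num
    _ ≤ M.eRk P := hf.three_le_eRk hV.ge
  obtain ⟨C, hCP, hCL, hPs⟩ := hround.exists_contract_spanning hP hLP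
  rw [← Nat.card_eq_fintype_card] at hLu ⊢
  obtain ⟨p, -, R, hR, hRu⟩ :=
    (hf.of_restrict_eq hCP.symm).exists_isUnif2_contractElem_restrict hV hPs (hCL ▸ hLu)
  rw [contract_contract] at hR hRu
  exact hasLineMinor_of_contract_restrict hR hRu

/-- A round matroid with a `U_{2,q+2}`-restriction and a `PG(2,q)`-restriction has a
`U_{2,q^2+1}`-minor. -/
theorem stmt3 {α : Type*} (M : Matroid α) [M.Finite] (F : Type) [Field F] [Fintype F]
    (hround : Round M) (L P : Set α) (hL : L ⊆ M.E) (hP : P ⊆ M.E)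
    (hLu : IsUnif2 (M ↾ L) (Fintype.card F + 2)) (hPG : IsProjGeom (M ↾ P) 3 F) :
    HasLineMinor M (Fintype.card F ^ 2 + 1) :=
  stmt3_general M F hround L P hP hLu hPG
end

section
/- Let f : ℕ → ℤ be a function with f(1) ≥ 1 and f(k) ≥ 2f(k−1) − 1 for all k ≥ 1. If M is a matroid with r(M) ≥ 1 and ε(M) ≥ f(r(M)), then M has a round restriction N with r(N) ≥ 1 and ε(N) ≥ f(r(N)). -/
open Matroid Set

/-!
Induction on the rank. If `M` is not round, write `E(M) = A ∪ B` with `r(A), r(B) < r(M)`.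
The points of `M ↾ X` are the classes `cl{e}` of the nonloops `e ∈ X`, so
`ε(M) ≤ ε(M ↾ A) + ε(M ↾ B)` and one side, say `B`, has `2 ε(M ↾ B) ≥ f(r(M)) ≥ 2 f(r(M) - 1) - 1`.
Hence `ε(M ↾ B) ≥ f(r(M) - 1) ≥ f(r(M ↾ B))`, as `f` is nondecreasing on `k ≥ 1`, and the
induction hypothesis applies to `M ↾ B`.
-/

namespace Matroid

variable {α : Type*} {M : Matroid α} {X A B C I : Set α}

lemma mrk_eq_ncard [M.RankFinite] (hI : M.IsBasis' I X) : mrk M X = I.ncard := by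
  have hle (J : {J : Set α // M.Indep J ∧ J ⊆ X}) : J.1.ncard ≤ I.ncard := by
    have hJ := J.2.1.encard_le_eRk_of_subset J.2.2
    rw [← hI.encard_eq_eRk] at hJ
    exact ENat.toNat_le_toNat hJ hI.indep.finite.encard_lt_top.ne
  have : Nonempty {J : Set α // M.Indep J ∧ J ⊆ X} := ⟨⟨I, hI.indep, hI.subset⟩⟩
  exact le_antisymm (ciSup_le hle)
    (le_ciSup ⟨I.ncard, forall_mem_range.2 hle⟩ (⟨I, hI.indep, hI.subset⟩ : {J // _}))

lemma cast_mrk_eq_eRk [M.RankFinite] (X : Set α) : (mrk M X : ℕ∞) = M.eRk X := by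
  obtain ⟨I, hI⟩ := M.exists_isBasis' X
  rw [mrk_eq_ncard hI, hI.eRk_eq_encard, hI.indep.finite.cast_ncard_eq]

lemma mrk_union_le [M.RankFinite] (A B : Set α) : mrk M (A ∪ B) ≤ mrk M A + mrk M B := by
  have := M.eRk_union_le_eRk_add_eRk A B
  rw [← cast_mrk_eq_eRk, ← cast_mrk_eq_eRk, ← cast_mrk_eq_eRk] at this
  exact_mod_cast this

lemma mrank_restrict [M.RankFinite] (X : Set α) : mrank (M ↾ X) = mrk M X := by
  have h := (M.restrict_eRk_eq (subset_refl X))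
  rw [← cast_mrk_eq_eRk, ← cast_mrk_eq_eRk] at h
  exact_mod_cast h

lemma setOf_isFlat_mrk_eq_one_eq_image [M.RankFinite] :
    {P | M.IsFlat P ∧ mrk M P = 1} = (fun e ↦ M.closure {e}) '' {e | M.IsNonloop e} := by
  ext P
  constructor
  · rintro ⟨hP, hP1⟩
    obtain ⟨I, hI⟩ := M.exists_isBasis' P
    obtain ⟨e, rfl⟩ := ncard_eq_one.1 (mrk_eq_ncard hI ▸ hP1)
    exact ⟨e, indep_singleton.1 hI.indep,
      show M.closure {e} = P by rw [hI.closure_eq_closure, hP.closure]⟩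
  · rintro ⟨e, he, rfl⟩
    exact ⟨M.isFlat_closure _,
      by rw [mrk_eq_ncard he.indep.isBasis_closure.isBasis', ncard_singleton]⟩

lemma eps_eq_ncard_image [M.RankFinite] (hX : X ⊆ M.E) :
    eps M X = ((fun e ↦ M.closure {e}) '' {e ∈ X | M.IsNonloop e}).ncard := by
  have hinj : InjOn (· ∩ X) ((fun e ↦ M.closure {e}) '' {e ∈ X | M.IsNonloop e}) := by
    rintro _ ⟨e, ⟨heX, he⟩, rfl⟩ _ ⟨f, -, rfl⟩ (hef : M.closure {e} ∩ X = M.closure {f} ∩ X)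
    have hmem : e ∈ M.closure {e} ∩ X := ⟨M.mem_closure_self e he.mem_ground, heX⟩
    exact he.closure_eq_of_mem_closure (inter_subset_left (hef ▸ hmem : e ∈ M.closure {f} ∩ X))
  rw [eps, setOf_isFlat_mrk_eq_one_eq_image, ← hinj.ncard_image, image_image]
  congr 1
  ext P
  simp only [mem_image, mem_ofPred_eq, restrict_isNonloop_iff]
  refine exists_congr fun e ↦ ⟨?_, ?_⟩
  · rintro ⟨⟨he, heX⟩, rfl⟩
    exact ⟨⟨heX, he⟩, (restrict_closure_eq M (singleton_subset_iff.2 heX)).symm⟩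
  · rintro ⟨⟨heX, he⟩, rfl⟩
    exact ⟨⟨he, heX⟩, restrict_closure_eq M (singleton_subset_iff.2 heX)⟩

lemma eps_union_le [M.RankFinite] (hA : A ⊆ M.E) (hB : B ⊆ M.E) :
    eps M (A ∪ B) ≤ eps M A + eps M B := by
  rw [eps_eq_ncard_image (union_subset hA hB), eps_eq_ncard_image hA, eps_eq_ncard_image hB,
    show {e | e ∈ A ∪ B ∧ M.IsNonloop e} = _ from sep_union, image_union]
  exact ncard_union_le _ _

lemma one_le_mrk_of_one_le_eps [M.RankFinite] (hX : X ⊆ M.E) (h : 1 ≤ eps M X) :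
    1 ≤ mrk M X := by
  rw [eps_eq_ncard_image hX] at h
  obtain ⟨_, e, ⟨heX, he⟩, rfl⟩ := nonempty_of_ncard_ne_zero (Nat.one_le_iff_ne_zero.1 h)
  have he1 := he.indep.encard_le_eRk_of_subset (singleton_subset_iff.2 heX)
  rw [encard_singleton, ← cast_mrk_eq_eRk] at he1
  exact_mod_cast he1

lemma eps_restrict_of_subset (hXC : X ⊆ C) : eps (M ↾ C) X = eps M X := by
  rw [eps, eps, restrict_restrict_eq M hXC]

end Matroid

section Doubling

variable {f : ℕ → ℤ}

lemma one_le_of_doubling (hf1 : 1 ≤ f 1) (hf : ∀ k, 1 ≤ k → 2 * f (k - 1) - 1 ≤ f k) {k : ℕ}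
    (hk : 1 ≤ k) : 1 ≤ f k := by
  induction k, hk using Nat.le_induction with
  | base => exact hf1
  | succ n hn ih =>
    have := hf (n + 1) (by omega)
    rw [Nat.add_sub_cancel] at this
    omega

lemma monotoneOn_of_doubling (hf1 : 1 ≤ f 1) (hf : ∀ k, 1 ≤ k → 2 * f (k - 1) - 1 ≤ f k) :
    MonotoneOn f (Ici 1) := by
  refine monotoneOn_nat_Ici_of_le_succ fun n hn ↦ ?_
  have := hf (n + 1) (by omega)
  rw [Nat.add_sub_cancel] at this
  have := one_le_of_doubling hf1 hf hn
  omega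

end Doubling

namespace Matroid

variable {α : Type*} {M : Matroid α} {f : ℕ → ℤ}

lemma exists_dense_restrict_of_not_round [M.RankFinite] (hf1 : 1 ≤ f 1)
    (hf : ∀ k, 1 ≤ k → 2 * f (k - 1) - 1 ≤ f k) (hR : ¬ Round M)
    (heps : f (mrank M) ≤ eps M M.E) :
    ∃ C ⊆ M.E, 1 ≤ mrk M C ∧ mrk M C < mrank M ∧ f (mrk M C) ≤ eps M C := by
  obtain ⟨A, B, hAB, -, hA, hB⟩ := not_not.1 hR
  have hAE : A ⊆ M.E := hAB ▸ subset_union_left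
  have hBE : B ⊆ M.E := hAB ▸ subset_union_right
  have hr : mrank M ≤ mrk M A + mrk M B := by rw [mrank, ← hAB]; exact mrk_union_le A B
  have hsplit : eps M M.E ≤ eps M A + eps M B := hAB ▸ eps_union_le hAE hBE
  suffices h : ∀ C ⊆ M.E, mrk M C < mrank M → f (mrank M) ≤ 2 * eps M C →
      ∃ C ⊆ M.E, 1 ≤ mrk M C ∧ mrk M C < mrank M ∧ f (mrk M C) ≤ eps M C by
    rcases le_total (eps M A) (eps M B) with hle | hle
    · exact h B hBE hB (by omega)
    · exact h A hAE hA (by omega)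
  intro C hCE hC hC2
  have hfC : f (mrank M - 1) ≤ eps M C := by
    have := hf (mrank M) (by omega)
    omega
  have hf1C := one_le_of_doubling hf1 hf (k := mrank M - 1) (by omega)
  have hC1 : 1 ≤ mrk M C := one_le_mrk_of_one_le_eps hCE (by omega)
  have hfmono : f (mrk M C) ≤ f (mrank M - 1) :=
    monotoneOn_of_doubling hf1 hf hC1 (mem_Ici.2 (by omega)) (by omega)
  exact ⟨C, hCE, hC1, hC, hfmono.trans hfC⟩

end Matroid

/-- A matroid that is dense with respect to a doubling function has a dense round
restriction. -/
theorem stmt6 {α : Type*} (M : Matroid α) [M.Finite] (f : ℕ → ℤ)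
    (hf1 : 1 ≤ f 1) (hf : ∀ k, 1 ≤ k → 2 * f (k - 1) - 1 ≤ f k)
    (hr : 1 ≤ mrank M) (heps : f (mrank M) ≤ (eps M M.E : ℤ)) :
    ∃ X ⊆ M.E, Round (M ↾ X) ∧ 1 ≤ mrank (M ↾ X) ∧
      f (mrank (M ↾ X)) ≤ (eps M X : ℤ) := by
  induction hn : mrank M using Nat.strong_induction_on generalizing M with
  | _ n ih =>
  by_cases hR : Round M
  · exact ⟨M.E, Subset.rfl, by rw [restrict_ground_eq_self]; exact ⟨hR, hr, heps⟩⟩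
  obtain ⟨C, hCE, hC1, hCr, hCf⟩ := exists_dense_restrict_of_not_round hf1 hf hR heps
  have : (M ↾ C).Finite := ⟨M.ground_finite.subset hCE⟩
  obtain ⟨X, hXC : X ⊆ C, hX⟩ := ih _ (hn ▸ hCr) (M ↾ C) (by rwa [mrank_restrict])
    (by rwa [mrank_restrict, restrict_ground_eq, eps_restrict_of_subset subset_rfl])
    (mrank_restrict C)
  rw [restrict_restrict_eq M hXC, eps_restrict_of_subset hXC] at hX
  exact ⟨X, hXC.trans hCE, hX⟩
end

section
/- If M is a matroid with two disjoint lines L1 and L2 satisfying ⊓_M(L1, L2) = 1, and every line of M has at least q + 1 points, then for any e ∈ L1, the set L2 spans a line with at least q + 2 points in M/e. -/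
/-!
Write `N = M ／ {e}`. A point `P ⊆ L2` of `M` is sent to the point `cl_N(P) = cl_M(P ∪ e) \ e` of
`N`, which lies in `cl_N(L2)` and meets the flat `L2` exactly in `P` (exchange: otherwise
`e ∈ L2`), so the points of `L2` stay distinct. Since `r(L2 ∪ e) = 3 = r(L1 ∪ L2)`, the line `L1`
lies in `cl_M(L2 ∪ e)`; a point `f ∈ L1` off `e` therefore gives the point `cl_N(f) ⊆ L1` of
`cl_N(L2)`, which is disjoint from `L2` and hence new.
-/

open Matroid Set

lemma mcontract_eq_contract {α : Type*} (M : Matroid α) (C : Set α) : mcontract M C = M ／ C :=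
  rfl

namespace Matroid

variable {α : Type*} {M : Matroid α} {F L P Q X Y : Set α} {e : α}

lemma IsRkFinite.cast_mrk (hX : M.IsRkFinite X) : (mrk M X : ℕ∞) = M.eRk X := by
  obtain ⟨I, hI, hIfin⟩ := hX.exists_finite_isBasis'
  have : Nonempty {J : Set α // M.Indep J ∧ J ⊆ X} := ⟨⟨∅, M.empty_indep, empty_subset X⟩⟩
  have hle : ∀ J : {J : Set α // M.Indep J ∧ J ⊆ X}, J.1.ncard ≤ I.ncard := fun J ↦ by
    have hJ := J.2.1.encard_le_eRk_of_subset J.2.2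
    rw [← hI.encard_eq_eRk] at hJ
    exact ENat.toNat_le_toNat hJ (encard_ne_top_iff.2 hIfin)
  have : mrk M X = I.ncard :=
    le_antisymm (ciSup_le hle) (le_ciSup ⟨_, forall_mem_range.2 hle⟩ ⟨I, hI.indep, hI.subset⟩)
  rw [this, hIfin.cast_ncard_eq, hI.encard_eq_eRk]

lemma mrk_eq_iff_eRk_eq [M.RankFinite] {n : ℕ} : mrk M X = n ↔ M.eRk X = n := by
  rw [← (M.isRkFinite_set X).cast_mrk, Nat.cast_inj]

def IsPoint (M : Matroid α) (P : Set α) : Prop := M.IsFlat P ∧ M.eRk P = 1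

lemma IsPoint.nonempty (hP : M.IsPoint P) : P.Nonempty := by
  rw [nonempty_iff_ne_empty]
  rintro rfl
  simpa using hP.2

lemma IsNonloop.isPoint_closure (he : M.IsNonloop e) : M.IsPoint (M.closure {e}) :=
  ⟨isFlat_closure _, by rw [eRk_closure_eq, he.eRk_eq]⟩

lemma IsFlat.isFlat_restrict_iff (hF : M.IsFlat F) : (M ↾ F).IsFlat P ↔ M.IsFlat P ∧ P ⊆ F := by
  rw [isFlat_iff_closure_eq, isFlat_iff_closure_eq, restrict_closure_eq',
    sdiff_eq_empty.2 hF.subset_ground, union_empty]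
  constructor
  · intro h
    have hPF : P ⊆ F := h ▸ inter_subset_right
    rw [inter_eq_self_of_subset_left hPF] at h
    rw [inter_eq_self_of_subset_left ((M.closure_subset_closure hPF).trans hF.closure.subset)] at h
    exact ⟨h, hPF⟩
  · rintro ⟨h, hPF⟩
    rw [inter_eq_self_of_subset_left hPF, h, inter_eq_self_of_subset_left hPF]

lemma eps_eq_ncard_isPoint [M.RankFinite] (hF : M.IsFlat F) :
    eps M F = {P | M.IsPoint P ∧ P ⊆ F}.ncard := by
  unfold eps IsPoint
  congr 1
  ext P
  simp only [mem_ofPred_eq, hF.isFlat_restrict_iff, mrk_eq_iff_eRk_eq, Nat.cast_one]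
  constructor
  · rintro ⟨⟨hP, hPF⟩, h1⟩
    exact ⟨⟨hP, by rwa [restrict_eRk_eq _ hPF] at h1⟩, hPF⟩
  · rintro ⟨⟨hP, h1⟩, hPF⟩
    exact ⟨⟨hP, hPF⟩, by rwa [restrict_eRk_eq _ hPF]⟩

lemma eRk_contract_add_eRk (M : Matroid α) (C X : Set α) :
    (M ／ C).eRk X + M.eRk C = M.eRk (X ∪ C) := by
  obtain ⟨J, hJ⟩ := M.exists_isBasis' C
  obtain ⟨K, hK, hJK⟩ :=
    hJ.indep.subset_isBasis'_of_subset (hJ.subset.trans (subset_union_right (s := X)))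
  have hKC : K ∩ C = J :=
    (hJ.eq_of_subset_indep (hK.indep.inter_right C) (subset_inter hJK hJ.subset)
      inter_subset_right).symm
  have hKX : (M ／ C).IsBasis' (K \ C) X := by
    have h := hK.contract_isBasis' hJ (hK.indep.subset (union_subset sdiff_subset hJK))
    rw [union_sdiff_right, isBasis'_iff_isBasis_inter_ground, contract_ground] at h
    rwa [isBasis'_iff_isBasis_inter_ground, contract_ground,
      show X ∩ (M.E \ C) = X \ C ∩ (M.E \ C) by tauto_set]
  rw [← hKX.encard_eq_eRk, ← hJ.encard_eq_eRk, ← hK.encard_eq_eRk, ← hKC,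
    encard_sdiff_add_encard_inter]

lemma eRk_contractElem_eq (he : e ∈ M.E \ M.closure X) : (M ／ {e}).eRk X = M.eRk X := by
  have hsum := M.eRk_contract_add_eRk {e} X
  rw [union_singleton, eRk_insert_eq_add_one he,
    (isNonloop_of_notMem_closure he.2 he.1).eRk_eq] at hsum
  exact WithTop.add_right_cancel ENat.one_ne_top hsum

lemma exists_mem_notMem_closure_of_eRk_lt (h : M.eRk Y < M.eRk X) :
    ∃ f ∈ X, f ∉ M.closure Y := by
  by_contra! hXY
  exact (M.eRk_mono hXY).trans_eq (M.eRk_closure_eq Y) |>.not_gt h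

lemma subset_closure_insert_of_eRk_union_le (hX : M.IsRkFinite X) (heY : e ∈ Y)
    (he : e ∈ M.E \ M.closure X) (hYE : Y ⊆ M.E) (hr : M.eRk (Y ∪ X) ≤ M.eRk X + 1) :
    Y ⊆ M.closure (insert e X) := by
  rw [(hX.insert e).closure_eq_closure_of_subset_of_eRk_ge_eRk
    (insert_subset (Or.inl heY) subset_union_right) (by rwa [eRk_insert_eq_add_one he])]
  exact M.subset_closure_of_subset' subset_union_left hYE

lemma IsFlat.closure_insert_inter_eq (hP : M.IsFlat P) (hF : M.IsFlat F) (hPF : P ⊆ F)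
    (he : e ∉ F) : M.closure (insert e P) ∩ F = P := by
  refine subset_antisymm (fun x ⟨hxe, hxF⟩ ↦ by_contra fun hxP ↦ he ?_)
    (subset_inter (M.subset_closure_of_subset' (subset_insert e P) hP.subset_ground) hPF)
  have hex := closure_exchange ⟨hxe, by rwa [hP.closure]⟩
  exact (M.closure_subset_closure (insert_subset hxF hPF)).trans hF.closure.subset hex.1

lemma ncard_isPoint_subset_lt_contractElem [M.Finite] (hL : M.IsFlat L) (he : e ∈ M.E \ L)
    (hQ : (M ／ {e}).IsPoint Q) (hQL : Q ⊆ (M ／ {e}).closure L) (hQdisj : Disjoint Q L) :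
    {P | M.IsPoint P ∧ P ⊆ L}.ncard <
      {R | (M ／ {e}).IsPoint R ∧ R ⊆ (M ／ {e}).closure L}.ncard := by
  set N := M ／ {e}
  set S := {P | M.IsPoint P ∧ P ⊆ L}
  set T := {R | N.IsPoint R ∧ R ⊆ N.closure L}
  have hrecover : ∀ P ∈ S, N.closure P ∩ L = P := fun P ⟨hP, hPL⟩ ↦ by
    rw [contract_closure_eq, union_singleton, sdiff_inter_right_comm,
      hP.1.closure_insert_inter_eq hL hPL he.2, sdiff_eq_left.2 (disjoint_singleton_right.2 ?_)]
    exact fun heP ↦ he.2 (hPL heP)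
  have hmaps : MapsTo N.closure S T := fun P ⟨hP, hPL⟩ ↦ by
    refine ⟨⟨isFlat_closure P, ?_⟩, N.closure_subset_closure hPL⟩
    rw [eRk_closure_eq, eRk_contractElem_eq ⟨he.1, fun heP ↦ he.2 (hPL (hP.1.closure ▸ heP))⟩]
    exact hP.2
  have hinj : InjOn N.closure S := fun P hP P' hP' h ↦ by
    rw [← hrecover P hP, h, hrecover P' hP']
  have hQnot : Q ∉ N.closure '' S := by
    rintro ⟨P, hP, rfl⟩
    obtain ⟨x, hx⟩ := hP.1.nonempty
    rw [← hrecover P hP] at hx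
    exact hQdisj.notMem_of_mem_left hx.1 hx.2
  have hTfin : T.Finite :=
    M.ground_finite.finite_subsets.subset fun R hR ↦
      hR.2.trans ((N.closure_subset_ground L).trans sdiff_subset)
  calc S.ncard = (N.closure '' S).ncard := hinj.ncard_image.symm
    _ < T.ncard := ncard_lt_ncard
        (ssubset_of_subset_of_ne hmaps.image_subset fun h ↦ hQnot (h ▸ ⟨hQ, hQL⟩)) hTfin

end Matroid

/-- Two disjoint lines with local connectivity 1 produce a long line after contracting a
point of one of them. -/
theorem stmt13 {α : Type*} (M : Matroid α) [M.Finite] (q : ℕ) (L1 L2 : Set α)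
    (hL1 : M.IsFlat L1) (hL2 : M.IsFlat L2) (h1 : mrk M L1 = 2) (h2 : mrk M L2 = 2)
    (hdisj : Disjoint L1 L2) (hconn : mrk M (L1 ∪ L2) = 3)
    (hlines : ∀ L, M.IsFlat L → mrk M L = 2 → q + 1 ≤ eps M L)
    (e : α) (he : e ∈ L1) :
    mrk (mcontract M {e}) ((mcontract M {e}).closure L2) = 2 ∧
      q + 2 ≤ eps (mcontract M {e}) ((mcontract M {e}).closure L2) := by
  rw [mcontract_eq_contract]
  have hL2_long := hlines L2 hL2 h2
  rw [eps_eq_ncard_isPoint hL2] at hL2_long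
  simp only [mrk_eq_iff_eRk_eq, Nat.cast_ofNat] at h1 h2 hconn
  have heL2 : e ∈ M.E \ L2 := ⟨hL1.subset_ground he, hdisj.notMem_of_mem_left he⟩
  have heL2' : e ∈ M.E \ M.closure L2 := by rwa [hL2.closure]
  have hL1_span : L1 ⊆ M.closure (insert e L2) :=
    subset_closure_insert_of_eRk_union_le (M.isRkFinite_set L2) he heL2' hL1.subset_ground
      (by rw [hconn, h2]; rfl)
  obtain ⟨f, hfL1, hf⟩ := exists_mem_notMem_closure_of_eRk_lt
    ((M.eRk_singleton_le e).trans_lt (by rw [h1]; decide) : M.eRk {e} < M.eRk L1)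
  have hQ := (contract_isNonloop_iff.2 ⟨hL1.subset_ground hfL1, hf⟩).isPoint_closure
  have hQL2 : (M ／ {e}).closure {f} ⊆ (M ／ {e}).closure L2 := by
    refine (M ／ {e}).closure_subset_closure_of_subset_closure (singleton_subset_iff.2 ?_)
    rw [contract_closure_eq, union_singleton]
    exact ⟨hL1_span hfL1, fun hfe ↦ hf (hfe ▸ M.mem_closure_self e (hL1.subset_ground he))⟩
  have hQL1 : (M ／ {e}).closure {f} ⊆ L1 := by
    rw [contract_closure_eq, singleton_union]
    exact sdiff_subset.trans <| (M.closure_subset_closure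
      (insert_subset hfL1 (singleton_subset_iff.2 he))).trans hL1.closure.subset
  refine ⟨by rw [mrk_eq_iff_eRk_eq, eRk_closure_eq, eRk_contractElem_eq heL2', h2]; rfl, ?_⟩
  have hlt := ncard_isPoint_subset_lt_contractElem hL2 heL2 hQ hQL2 (hdisj.mono_left hQL1)
  rw [eps_eq_ncard_isPoint (isFlat_closure _)]
  omega
end
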